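/- arXiv:1310.3316 — 4 statements merged into one kernel-verified Lean document; each statement's English description precedes it below -/
import Mathlib

section
/- For the 4-leaf star tree map (p_1,p_2,p_3,p_4) ↦ (s_1,s_2,s_3,s_4) where s_i = p_i ∏_{j≠i}(1-p_j) + (1-p_i)∏_{j≠i} p_j, the determinant of the 4×4 Jacobian matrix [∂s_i/∂p_j] equals the product of the three factors (2p_1p_2 - p_1 - p_2 + 1 - p_3 - p_4 + 2p_3p_4) · (2p_1p_3 - p_1 - p_3 + 1 - p_2 - p_4 + 2p_2p_4) · (2p_1p_4 - p_1 - p_4 + 1 - p_2 - p_3 + 2p_2p_3). -/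
/-!
Each `s_i` is affine in every single coordinate `p_j`, so `∂s_i/∂p_j` is the difference
`s_i(p[p_j ↦ 1]) - s_i(p[p_j ↦ 0])`, an explicit polynomial in the remaining coordinates.
The factorization is then a polynomial identity, checked by cofactor expansion of the
`4 × 4` determinant.
-/

/-- The tree split probabilities of the 4-leaf star tree, as a function of the edge
change probabilities: `s i p = p i ∏_{j≠i}(1-p j) + (1-p i) ∏_{j≠i} p j`. -/
def starSplit (i : Fin 4) (p : Fin 4 → ℝ) : ℝ :=
  p i * ∏ j ∈ Finset.univ.erase i, (1 - p j) +
    (1 - p i) * ∏ j ∈ Finset.univ.erase i, p j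

open Finset Function

theorem Fin.prod_univ_erase {M : Type*} [CommMonoid M] {n : ℕ} (i : Fin (n + 1))
    (f : Fin (n + 1) → M) : ∏ j ∈ univ.erase i, f j = ∏ k : Fin n, f (i.succAbove k) := by
  rw [← compl_singleton, ← Fin.image_succAbove_univ,
    prod_image fun _ _ _ _ h => Fin.succAbove_right_injective h]

theorem Matrix.det_fin_four {R : Type*} [CommRing R] (A : Matrix (Fin 4) (Fin 4) R) :
    A.det =
      A 0 0 * (A 1 1 * (A 2 2 * A 3 3 - A 2 3 * A 3 2) - A 1 2 * (A 2 1 * A 3 3 - A 2 3 * A 3 1)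
        + A 1 3 * (A 2 1 * A 3 2 - A 2 2 * A 3 1))
      - A 0 1 * (A 1 0 * (A 2 2 * A 3 3 - A 2 3 * A 3 2) - A 1 2 * (A 2 0 * A 3 3 - A 2 3 * A 3 0)
        + A 1 3 * (A 2 0 * A 3 2 - A 2 2 * A 3 0))
      + A 0 2 * (A 1 0 * (A 2 1 * A 3 3 - A 2 3 * A 3 1) - A 1 1 * (A 2 0 * A 3 3 - A 2 3 * A 3 0)
        + A 1 3 * (A 2 0 * A 3 1 - A 2 1 * A 3 0))
      - A 0 3 * (A 1 0 * (A 2 1 * A 3 2 - A 2 2 * A 3 1) - A 1 1 * (A 2 0 * A 3 2 - A 2 2 * A 3 0)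
        + A 1 2 * (A 2 0 * A 3 1 - A 2 1 * A 3 0)) := by
  simp only [det_succ_row_zero, Fin.sum_univ_succ, submatrix_apply, Fin.succAbove, det_unique,
    Fin.default_eq_zero, Fin.coe_ofNat_eq_mod, ↓reduceIte, Fin.reduceSucc, Fin.reduceCastSucc,
    Fin.reduceLT]
  ring

theorem starSplit_update_self (i : Fin 4) (p : Fin 4 → ℝ) (t : ℝ) :
    starSplit i (update p i t) =
      t * ∏ k ∈ univ.erase i, (1 - p k) + (1 - t) * ∏ k ∈ univ.erase i, p k := by
  have hp : ∀ k ∈ univ.erase i, update p i t k = p k := fun k hk =>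
    update_of_ne (ne_of_mem_erase hk) t p
  rw [starSplit, update_self, prod_congr rfl hp,
    prod_congr rfl fun k hk => congrArg (1 - ·) (hp k hk)]

theorem starSplit_update_of_ne {i j : Fin 4} (hji : j ≠ i) (p : Fin 4 → ℝ) (t : ℝ) :
    starSplit i (update p j t) =
      p i * ((1 - t) * ∏ k ∈ (univ.erase i).erase j, (1 - p k)) +
        (1 - p i) * (t * ∏ k ∈ (univ.erase i).erase j, p k) := by
  have hj : j ∈ univ.erase i := mem_erase.2 ⟨hji, mem_univ j⟩
  have hp : ∀ k ∈ (univ.erase i).erase j, update p j t k = p k := fun k hk =>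
    update_of_ne (ne_of_mem_erase hk) t p
  rw [starSplit, update_of_ne hji.symm, ← mul_prod_erase _ _ hj, ← mul_prod_erase _ _ hj,
    update_self, prod_congr rfl hp, prod_congr rfl fun k hk => congrArg (1 - ·) (hp k hk)]

theorem starSplit_update_affine (i j : Fin 4) (p : Fin 4 → ℝ) (t : ℝ) :
    starSplit i (update p j t) =
      (1 - t) * starSplit i (update p j 0) + t * starSplit i (update p j 1) := by
  obtain rfl | hji := eq_or_ne j i
  · simp only [starSplit_update_self]
    ring
  · simp only [starSplit_update_of_ne hji]
    ring

theorem deriv_starSplit_update (i j : Fin 4) (p : Fin 4 → ℝ) (x : ℝ) :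
    deriv (fun t => starSplit i (update p j t)) x =
      starSplit i (update p j 1) - starSplit i (update p j 0) := by
  rw [funext (starSplit_update_affine i j p)]
  set a := starSplit i (update p j 0)
  set b := starSplit i (update p j 1)
  have h := (((hasDerivAt_id' x).const_sub 1).mul_const a).add ((hasDerivAt_id' x).mul_const b)
  exact h.deriv.trans (by ring)

/-- The determinant of the Jacobian matrix `[∂s_i/∂p_j]` of the map
`(p₁,p₂,p₃,p₄) ↦ (s₁,s₂,s₃,s₄)` factors into three explicit quadratic factors. -/
theorem star_jacobian_det_factorization (p : Fin 4 → ℝ) :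
    (Matrix.of fun i j : Fin 4 =>
        deriv (fun t => starSplit i (Function.update p j t)) (p j)).det =
      (2 * p 0 * p 1 - p 0 - p 1 + 1 - p 2 - p 3 + 2 * p 2 * p 3) *
        (2 * p 0 * p 2 - p 0 - p 2 + 1 - p 1 - p 3 + 2 * p 1 * p 3) *
        (2 * p 0 * p 3 - p 0 - p 3 + 1 - p 1 - p 2 + 2 * p 1 * p 2) := by
  simp only [Matrix.det_fin_four, Matrix.of_apply, deriv_starSplit_update]
  simp only [starSplit, update_apply, Fin.prod_univ_erase, Fin.prod_univ_three, Fin.succAbove,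
    ↓reduceIte, Fin.reduceSucc, Fin.reduceEq, Fin.reduceLT, Fin.reduceCastSucc]
  ring
end

section
/- For p_1,...,p_4 ∈ [0, 1/2), the Jacobian determinant of the map (p_1,p_2,p_3,p_4) ↦ (s_1,s_2,s_3,s_4), with s_i = p_i ∏_{j≠i}(1-p_j) + (1-p_i)∏_{j≠i} p_j, is strictly positive; hence the map is locally invertible at every point of [0,1/2)^4. -/
open Function

theorem ContDiffAt.exists_isOpen_injOn_of_det_ne_zero {𝕜 ι : Type*} [RCLike 𝕜] [Fintype ι]
    [DecidableEq ι] {f : (ι → 𝕜) → ι → 𝕜} {p : ι → 𝕜} (hf : ContDiffAt 𝕜 1 f p)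
    (hdet : (Matrix.of fun i j => deriv (fun t => f (update p j t) i) (p j)).det ≠ 0) :
    ∃ U : Set (ι → 𝕜), IsOpen U ∧ p ∈ U ∧ Set.InjOn f U := by
  set D := fderiv 𝕜 f p
  have hpartial : LinearMap.toMatrix' (D : (ι → 𝕜) →ₗ[𝕜] ι → 𝕜) =
      Matrix.of fun i j => deriv (fun t => f (update p j t) i) (p j) := by
    ext i j
    have hD : HasFDerivAt f D (update p j (p j)) := by
      rw [update_eq_self]
      exact (hf.differentiableAt one_ne_zero).hasFDerivAt
    exact (hasDerivAt_pi.1 (hD.comp_hasDerivAt _ (hasDerivAt_update p j (p j))) i).deriv.symm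
  have hD : D.det ≠ 0 := by
    rwa [ContinuousLinearMap.det, ← LinearMap.det_toMatrix', hpartial]
  have hstrict : HasStrictFDerivAt f
      (D.toContinuousLinearEquivOfDetNeZero hD : (ι → 𝕜) →L[𝕜] ι → 𝕜) p := by
    simpa using hf.hasStrictFDerivAt one_ne_zero
  refine ⟨_, (hstrict.toOpenPartialHomeomorph f).open_source,
    hstrict.mem_toOpenPartialHomeomorph_source, ?_⟩
  simpa using (hstrict.toOpenPartialHomeomorph f).injOn

theorem contDiff_starSplit {n : WithTop ℕ∞} : ContDiff ℝ n fun q (i : Fin 4) => starSplit i q := by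
  rw [contDiff_pi]
  intro i
  unfold starSplit
  fun_prop

lemma starSplit_eq_prod_ite (i : Fin 4) (p : Fin 4 → ℝ) :
    starSplit i p = p i * ∏ j, (if j = i then 1 else 1 - p j) +
      (1 - p i) * ∏ j, (if j = i then 1 else p j) := by
  simp [starSplit, ← Finset.filter_ne', Finset.prod_filter, ite_not]

/-- Finite differences in place of partial derivatives: `starSplit i` is affine in each
coordinate (`starSplit_update`). -/
def starJacobian (p : Fin 4 → ℝ) : Matrix (Fin 4) (Fin 4) ℝ :=
  Matrix.of fun i j => starSplit i (update p j 1) - starSplit i (update p j 0)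

lemma starSplit_update (p : Fin 4 → ℝ) (i j : Fin 4) (t : ℝ) :
    starSplit i (update p j t) = starSplit i (update p j 0) + t * starJacobian p i j := by
  simp only [starJacobian, Matrix.of_apply, starSplit_eq_prod_ite, Fin.prod_univ_four]
  fin_cases i <;> fin_cases j <;>
    simp only [Fin.reduceFinMk, Fin.zero_eta, Fin.mk_one, update_apply, Fin.reduceEq, ↓reduceIte] <;> ring

lemma hasDerivAt_starSplit_update (p : Fin 4 → ℝ) (i j : Fin 4) (x : ℝ) :
    HasDerivAt (fun t => starSplit i (update p j t)) (starJacobian p i j) x := by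
  rw [funext (starSplit_update p i j)]
  simpa using (hasDerivAt_id x).mul_const (starJacobian p i j)

noncomputable def pairingFactor (p : Fin 4 → ℝ) (a b c d : Fin 4) : ℝ :=
  (2 * p a - 1) * (2 * p b - 1) / 2 + (2 * p c - 1) * (2 * p d - 1) / 2

lemma pairingFactor_pos {p : Fin 4 → ℝ} (hp : ∀ k, p k < 1 / 2) (a b c d : Fin 4) :
    0 < pairingFactor p a b c d := by
  have hneg : ∀ k, 2 * p k - 1 < 0 := fun k => by linarith [hp k]
  have hab := mul_pos_of_neg_of_neg (hneg a) (hneg b)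
  have hcd := mul_pos_of_neg_of_neg (hneg c) (hneg d)
  unfold pairingFactor
  linarith

lemma det_starJacobian (p : Fin 4 → ℝ) :
    (starJacobian p).det =
      pairingFactor p 0 1 2 3 * pairingFactor p 0 2 1 3 * pairingFactor p 0 3 1 2 := by
  rw [Matrix.det_succ_row_zero]
  simp only [Fin.sum_univ_four, Matrix.det_fin_three, Matrix.submatrix_apply, Fin.succAbove,
    Fin.reduceSucc, Fin.reduceCastSucc, Fin.reduceLT, ↓reduceIte, Fin.coe_ofNat_eq_mod,
    starJacobian, Matrix.of_apply, starSplit_eq_prod_ite, Fin.prod_univ_four,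
    update_apply, Fin.reduceEq, sub_zero, sub_self, mul_zero, add_zero, zero_add, pairingFactor]
  ring

/-- For `p ∈ [0,1/2)⁴`, the Jacobian determinant of `(p₁,…,p₄) ↦ (s₁,…,s₄)` is strictly
positive; hence the map is locally invertible (injective on a neighborhood) at every
point of `[0,1/2)⁴`. -/
theorem star_jacobian_det_pos_and_locally_invertible (p : Fin 4 → ℝ)
    (hp : ∀ j, p j ∈ Set.Ico (0 : ℝ) (1 / 2)) :
    0 < (Matrix.of fun i j : Fin 4 =>
        deriv (fun t => starSplit i (Function.update p j t)) (p j)).det ∧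
      ∃ U : Set (Fin 4 → ℝ), IsOpen U ∧ p ∈ U ∧
        Set.InjOn (fun q (i : Fin 4) => starSplit i q) U := by
  have hJ : (Matrix.of fun i j : Fin 4 =>
      deriv (fun t => starSplit i (update p j t)) (p j)) = starJacobian p := by
    ext i j
    exact (hasDerivAt_starSplit_update p i j (p j)).deriv
  have hdet : 0 < (starJacobian p).det := by
    have hfactor := pairingFactor_pos fun k => (hp k).2
    rw [det_starJacobian]
    exact mul_pos (mul_pos (hfactor _ _ _ _) (hfactor _ _ _ _)) (hfactor _ _ _ _)
  rw [hJ]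
  exact ⟨hdet, contDiff_starSplit.contDiffAt.exists_isOpen_injOn_of_det_ne_zero (hJ ▸ hdet.ne')⟩
end

section
/- For the 4-leaf star tree, if (a_1,a_2,a_3,a_{123}) and (a'_1,a'_2,a'_3,a'_{123}) both lie in (0,1]^4 and give the same values of the four polynomials s_1, s_2, s_3, s_{123}, then (a_1,a_2,a_3,a_{123}) = (a'_1,a'_2,a'_3,a'_{123}). -/
lemma key_pair (u v u' v' : ℝ) (hu : 0 < u) (hv : 0 < v) (hu' : 0 < u')
    (hv' : 0 < v') (hP : u * v = u' * v') (hd : v - u = v' - u') :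
    u = u' ∧ v = v' := by
  have h1 : (u - u') * (u' + v) = 0 := by nlinarith
  have h2 : u = u' := by
    rcases mul_eq_zero.mp h1 with h | h
    · linarith
    · linarith
  exact ⟨h2, by linarith⟩


/-- For the 4-leaf star tree under the 2-state symmetric model (Hadamard
representation with `a_α = e^{-2q_α}`), two parameter tuples in `(0,1]⁴` giving the
same tree split probabilities `s₁, s₂, s₃, s₁₂₃` must be equal. -/
theorem star_tree_split_probs_determine_params
    (a₁ a₂ a₃ a₁₂₃ b₁ b₂ b₃ b₁₂₃ : ℝ)
    (ha₁ : a₁ ∈ Set.Ioc (0 : ℝ) 1) (ha₂ : a₂ ∈ Set.Ioc (0 : ℝ) 1)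
    (ha₃ : a₃ ∈ Set.Ioc (0 : ℝ) 1) (ha₁₂₃ : a₁₂₃ ∈ Set.Ioc (0 : ℝ) 1)
    (hb₁ : b₁ ∈ Set.Ioc (0 : ℝ) 1) (hb₂ : b₂ ∈ Set.Ioc (0 : ℝ) 1)
    (hb₃ : b₃ ∈ Set.Ioc (0 : ℝ) 1) (hb₁₂₃ : b₁₂₃ ∈ Set.Ioc (0 : ℝ) 1)
    (h₁ : a₁₂₃ * a₃ - a₁ * a₂ + a₂ * a₃ + a₁₂₃ * a₂ - a₁ * a₃ - a₁ * a₁₂₃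
            - a₁ * a₁₂₃ * a₂ * a₃ + 1
          = b₁₂₃ * b₃ - b₁ * b₂ + b₂ * b₃ + b₁₂₃ * b₂ - b₁ * b₃ - b₁ * b₁₂₃
            - b₁ * b₁₂₃ * b₂ * b₃ + 1)
    (h₂ : a₁₂₃ * a₃ - a₁ * a₂ - a₂ * a₃ - a₁₂₃ * a₂ + a₁ * a₃ + a₁ * a₁₂₃
            - a₁ * a₁₂₃ * a₂ * a₃ + 1
          = b₁₂₃ * b₃ - b₁ * b₂ - b₂ * b₃ - b₁₂₃ * b₂ + b₁ * b₃ + b₁ * b₁₂₃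
            - b₁ * b₁₂₃ * b₂ * b₃ + 1)
    (h₃ : -(a₁₂₃ * a₃) + a₁ * a₂ - a₂ * a₃ + a₁₂₃ * a₂ - a₁ * a₃ + a₁ * a₁₂₃
            - a₁ * a₁₂₃ * a₂ * a₃ + 1
          = -(b₁₂₃ * b₃) + b₁ * b₂ - b₂ * b₃ + b₁₂₃ * b₂ - b₁ * b₃ + b₁ * b₁₂₃
            - b₁ * b₁₂₃ * b₂ * b₃ + 1)
    (h₁₂₃ : -(a₁₂₃ * a₃) + a₁ * a₂ + a₂ * a₃ - a₁₂₃ * a₂ + a₁ * a₃ - a₁ * a₁₂₃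
            - a₁ * a₁₂₃ * a₂ * a₃ + 1
          = -(b₁₂₃ * b₃) + b₁ * b₂ + b₂ * b₃ - b₁₂₃ * b₂ + b₁ * b₃ - b₁ * b₁₂₃
            - b₁ * b₁₂₃ * b₂ * b₃ + 1) :
    a₁ = b₁ ∧ a₂ = b₂ ∧ a₃ = b₃ ∧ a₁₂₃ = b₁₂₃ := by
  obtain ⟨ha₁0, -⟩ := ha₁
  obtain ⟨ha₂0, -⟩ := ha₂
  obtain ⟨ha₃0, -⟩ := ha₃
  obtain ⟨ha₁₂₃0, -⟩ := ha₁₂₃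
  obtain ⟨hb₁0, -⟩ := hb₁
  obtain ⟨hb₂0, -⟩ := hb₂
  obtain ⟨hb₃0, -⟩ := hb₃
  obtain ⟨hb₁₂₃0, -⟩ := hb₁₂₃
  have hP : a₁ * a₂ * (a₃ * a₁₂₃) = b₁ * b₂ * (b₃ * b₁₂₃) := by linarith
  have hd1 : a₃ * a₁₂₃ - a₁ * a₂ = b₃ * b₁₂₃ - b₁ * b₂ := by linarith
  have hd2 : a₂ * a₁₂₃ - a₁ * a₃ = b₂ * b₁₂₃ - b₁ * b₃ := by linarith
  have hd3 : a₂ * a₃ - a₁ * a₁₂₃ = b₂ * b₃ - b₁ * b₁₂₃ := by linarith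
  have hP2 : a₁ * a₃ * (a₂ * a₁₂₃) = b₁ * b₃ * (b₂ * b₁₂₃) := by ring_nf; ring_nf at hP; linarith
  have hP3 : a₁ * a₁₂₃ * (a₂ * a₃) = b₁ * b₁₂₃ * (b₂ * b₃) := by ring_nf; ring_nf at hP; linarith
  obtain ⟨e12, e3123⟩ := key_pair _ _ _ _ (mul_pos ha₁0 ha₂0) (mul_pos ha₃0 ha₁₂₃0)
    (mul_pos hb₁0 hb₂0) (mul_pos hb₃0 hb₁₂₃0) hP hd1
  obtain ⟨e13, e2123⟩ := key_pair _ _ _ _ (mul_pos ha₁0 ha₃0) (mul_pos ha₂0 ha₁₂₃0)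
    (mul_pos hb₁0 hb₃0) (mul_pos hb₂0 hb₁₂₃0) hP2 hd2
  obtain ⟨e1123, e23⟩ := key_pair _ _ _ _ (mul_pos ha₁0 ha₁₂₃0) (mul_pos ha₂0 ha₃0)
    (mul_pos hb₁0 hb₁₂₃0) (mul_pos hb₂0 hb₃0) hP3 hd3
  have sq1 : a₁ ^ 2 * (b₂ * b₃) = b₁ ^ 2 * (b₂ * b₃) := by
    linear_combination (a₁ * a₃) * e12 + (b₁ * b₂) * e13 - a₁ ^ 2 * e23
  have h1 : a₁ = b₁ := by
    have hsq : a₁ ^ 2 = b₁ ^ 2 :=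
      mul_right_cancel₀ (ne_of_gt (mul_pos hb₂0 hb₃0)) sq1
    nlinarith [sq_nonneg (a₁ + b₁), mul_pos ha₁0 hb₁0]
  have h2 : a₂ = b₂ := by
    rw [h1] at e12
    exact mul_left_cancel₀ (ne_of_gt hb₁0) e12
  have h3 : a₃ = b₃ := by
    rw [h1] at e13
    exact mul_left_cancel₀ (ne_of_gt hb₁0) e13
  have h4 : a₁₂₃ = b₁₂₃ := by
    rw [h1] at e1123
    exact mul_left_cancel₀ (ne_of_gt hb₁0) e1123
  exact ⟨h1, h2, h3, h4⟩
end

section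
/- For the resolved 4-leaf tree polynomials, if two points (a_1,a_2,a_{12},a_3,a_{123}) and (a'_1,a'_2,a'_{12},a'_3,a'_{123}) in (0,1]^5 give the same values of the five polynomials s_1, s_2, s_{12}, s_3, s_{123}, then the two points are equal. -/
/-- For the resolved 4-leaf tree `12|34` under the 2-state symmetric model (Hadamard
representation with `a_α = e^{-2q_α}`), two parameter tuples in `(0,1]⁵` giving the
same tree split probabilities `s₁, s₂, s₁₂, s₃, s₁₂₃` must be equal. -/
theorem resolved_tree_split_probs_determine_params
    (a₁ a₂ a₁₂ a₃ a₁₂₃ b₁ b₂ b₁₂ b₃ b₁₂₃ : ℝ)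
    (ha₁ : a₁ ∈ Set.Ioc (0 : ℝ) 1) (ha₂ : a₂ ∈ Set.Ioc (0 : ℝ) 1)
    (ha₁₂ : a₁₂ ∈ Set.Ioc (0 : ℝ) 1) (ha₃ : a₃ ∈ Set.Ioc (0 : ℝ) 1)
    (ha₁₂₃ : a₁₂₃ ∈ Set.Ioc (0 : ℝ) 1)
    (hb₁ : b₁ ∈ Set.Ioc (0 : ℝ) 1) (hb₂ : b₂ ∈ Set.Ioc (0 : ℝ) 1)
    (hb₁₂ : b₁₂ ∈ Set.Ioc (0 : ℝ) 1) (hb₃ : b₃ ∈ Set.Ioc (0 : ℝ) 1)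
    (hb₁₂₃ : b₁₂₃ ∈ Set.Ioc (0 : ℝ) 1)
    (h₁ : a₁₂₃ * a₃ - a₁ * a₂ + a₁₂ * a₂ * a₃ + a₁₂ * a₁₂₃ * a₂ - a₁ * a₁₂ * a₃
            - a₁ * a₁₂ * a₁₂₃ - a₁ * a₁₂₃ * a₂ * a₃ + 1
          = b₁₂₃ * b₃ - b₁ * b₂ + b₁₂ * b₂ * b₃ + b₁₂ * b₁₂₃ * b₂ - b₁ * b₁₂ * b₃
            - b₁ * b₁₂ * b₁₂₃ - b₁ * b₁₂₃ * b₂ * b₃ + 1)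
    (h₂ : a₁₂₃ * a₃ - a₁ * a₂ - a₁₂ * a₂ * a₃ - a₁₂ * a₁₂₃ * a₂ + a₁ * a₁₂ * a₃
            + a₁ * a₁₂ * a₁₂₃ - a₁ * a₁₂₃ * a₂ * a₃ + 1
          = b₁₂₃ * b₃ - b₁ * b₂ - b₁₂ * b₂ * b₃ - b₁₂ * b₁₂₃ * b₂ + b₁ * b₁₂ * b₃
            + b₁ * b₁₂ * b₁₂₃ - b₁ * b₁₂₃ * b₂ * b₃ + 1)
    (h₁₂ : a₁₂₃ * a₃ + a₁ * a₂ - a₁₂ * a₂ * a₃ - a₁₂ * a₁₂₃ * a₂ - a₁ * a₁₂ * a₃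
            - a₁ * a₁₂ * a₁₂₃ + a₁ * a₁₂₃ * a₂ * a₃ + 1
          = b₁₂₃ * b₃ + b₁ * b₂ - b₁₂ * b₂ * b₃ - b₁₂ * b₁₂₃ * b₂ - b₁ * b₁₂ * b₃
            - b₁ * b₁₂ * b₁₂₃ + b₁ * b₁₂₃ * b₂ * b₃ + 1)
    (h₃ : -(a₁₂₃ * a₃) + a₁ * a₂ - a₁₂ * a₂ * a₃ + a₁₂ * a₁₂₃ * a₂ - a₁ * a₁₂ * a₃
            + a₁ * a₁₂ * a₁₂₃ - a₁ * a₁₂₃ * a₂ * a₃ + 1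
          = -(b₁₂₃ * b₃) + b₁ * b₂ - b₁₂ * b₂ * b₃ + b₁₂ * b₁₂₃ * b₂ - b₁ * b₁₂ * b₃
            + b₁ * b₁₂ * b₁₂₃ - b₁ * b₁₂₃ * b₂ * b₃ + 1)
    (h₁₂₃ : -(a₁₂₃ * a₃) + a₁ * a₂ + a₁₂ * a₂ * a₃ - a₁₂ * a₁₂₃ * a₂ + a₁ * a₁₂ * a₃
            - a₁ * a₁₂ * a₁₂₃ - a₁ * a₁₂₃ * a₂ * a₃ + 1
          = -(b₁₂₃ * b₃) + b₁ * b₂ + b₁₂ * b₂ * b₃ - b₁₂ * b₁₂₃ * b₂ + b₁ * b₁₂ * b₃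
            - b₁ * b₁₂ * b₁₂₃ - b₁ * b₁₂₃ * b₂ * b₃ + 1) :
    a₁ = b₁ ∧ a₂ = b₂ ∧ a₁₂ = b₁₂ ∧ a₃ = b₃ ∧ a₁₂₃ = b₁₂₃ := by

  obtain ⟨pa₁, _⟩ := ha₁
  obtain ⟨pa₂, _⟩ := ha₂
  obtain ⟨pa₁₂, _⟩ := ha₁₂
  obtain ⟨pa₃, _⟩ := ha₃
  obtain ⟨pa₁₂₃, _⟩ := ha₁₂₃
  obtain ⟨pb₁, _⟩ := hb₁
  obtain ⟨pb₂, _⟩ := hb₂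
  obtain ⟨pb₁₂, _⟩ := hb₁₂
  obtain ⟨pb₃, _⟩ := hb₃
  obtain ⟨pb₁₂₃, _⟩ := hb₁₂₃
  -- m₇ equality
  have e7 : a₁ * a₁₂₃ * a₂ * a₃ = b₁ * b₁₂₃ * b₂ * b₃ := by linarith
  -- m₂ - m₁ equality
  have eA : a₁₂₃ * a₃ - a₁ * a₂ = b₁₂₃ * b₃ - b₁ * b₂ := by linarith
  -- m₁ m₂ equality (ring identity m₁m₂ = m₇)
  have eP : (a₁ * a₂) * (a₁₂₃ * a₃) = (b₁ * b₂) * (b₁₂₃ * b₃) := by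
    linear_combination e7
  -- deduce m₁ equality
  have key1 : (a₁ * a₂ - b₁ * b₂) * (a₁₂₃ * a₃ + b₁ * b₂) = 0 := by
    linear_combination eP - (b₁ * b₂) * eA
  have e1 : a₁ * a₂ = b₁ * b₂ := by
    rcases mul_eq_zero.mp key1 with h | h
    · linarith
    · nlinarith [mul_pos pa₁₂₃ pa₃, mul_pos pb₁ pb₂]
  have e2 : a₁₂₃ * a₃ = b₁₂₃ * b₃ := by linarith
  -- m₄ - m₅ and m₃ - m₆ equalities
  have eC : a₁₂ * a₁₂₃ * a₂ - a₁ * a₁₂ * a₃ = b₁₂ * b₁₂₃ * b₂ - b₁ * b₁₂ * b₃ := by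
    linarith
  have eD : a₁₂ * a₂ * a₃ - a₁ * a₁₂ * a₁₂₃ = b₁₂ * b₂ * b₃ - b₁ * b₁₂ * b₁₂₃ := by
    linarith
  -- S = m₃+m₄+m₅+m₆ equality
  have eS : a₁₂ * a₂ * a₃ + a₁₂ * a₁₂₃ * a₂ + a₁ * a₁₂ * a₃ + a₁ * a₁₂ * a₁₂₃
      = b₁₂ * b₂ * b₃ + b₁₂ * b₁₂₃ * b₂ + b₁ * b₁₂ * b₃ + b₁ * b₁₂ * b₁₂₃ := by
    linarith
  have Spos : 0 < a₁₂ * a₂ * a₃ + a₁₂ * a₁₂₃ * a₂ + a₁ * a₁₂ * a₃ + a₁ * a₁₂ * a₁₂₃ := by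
    have := mul_pos (mul_pos pa₁₂ pa₂) pa₃
    have := mul_pos (mul_pos pa₁₂ pa₁₂₃) pa₂
    have := mul_pos (mul_pos pa₁ pa₁₂) pa₃
    have := mul_pos (mul_pos pa₁ pa₁₂) pa₁₂₃
    linarith
  -- U = (m₃+m₆) - (m₄+m₅) equality, via the ring identity U*S = D² - C²
  have idA : (a₁₂ * a₂ * a₃ + a₁ * a₁₂ * a₁₂₃ - a₁₂ * a₁₂₃ * a₂ - a₁ * a₁₂ * a₃)
        * (a₁₂ * a₂ * a₃ + a₁₂ * a₁₂₃ * a₂ + a₁ * a₁₂ * a₃ + a₁ * a₁₂ * a₁₂₃)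
      = (a₁₂ * a₂ * a₃ - a₁ * a₁₂ * a₁₂₃)^2 - (a₁₂ * a₁₂₃ * a₂ - a₁ * a₁₂ * a₃)^2 := by
    ring
  have idB : (b₁₂ * b₂ * b₃ + b₁ * b₁₂ * b₁₂₃ - b₁₂ * b₁₂₃ * b₂ - b₁ * b₁₂ * b₃)
        * (b₁₂ * b₂ * b₃ + b₁₂ * b₁₂₃ * b₂ + b₁ * b₁₂ * b₃ + b₁ * b₁₂ * b₁₂₃)
      = (b₁₂ * b₂ * b₃ - b₁ * b₁₂ * b₁₂₃)^2 - (b₁₂ * b₁₂₃ * b₂ - b₁ * b₁₂ * b₃)^2 := by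
    ring
  have eU : a₁₂ * a₂ * a₃ + a₁ * a₁₂ * a₁₂₃ - a₁₂ * a₁₂₃ * a₂ - a₁ * a₁₂ * a₃
      = b₁₂ * b₂ * b₃ + b₁ * b₁₂ * b₁₂₃ - b₁₂ * b₁₂₃ * b₂ - b₁ * b₁₂ * b₃ := by
    rw [eC, eD] at idA
    rw [eS] at idA
    rw [← idB] at idA
    exact mul_right_cancel₀ (by rw [← eS]; exact ne_of_gt Spos) idA
  -- individual monomial equalities
  have e3 : a₁₂ * a₂ * a₃ = b₁₂ * b₂ * b₃ := by linarith
  have e4 : a₁₂ * a₁₂₃ * a₂ = b₁₂ * b₁₂₃ * b₂ := by linarith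
  have e5 : a₁ * a₁₂ * a₃ = b₁ * b₁₂ * b₃ := by linarith
  have e6 : a₁ * a₁₂ * a₁₂₃ = b₁ * b₁₂ * b₁₂₃ := by linarith
  -- recover the variables
  have sq_eq : ∀ x y : ℝ, 0 < x → 0 < y → x^2 = y^2 → x = y := by
    intro x y hx hy h
    have : (x - y) * (x + y) = 0 := by linear_combination h
    rcases mul_eq_zero.mp this with h' | h'
    · linarith
    · linarith
  have m3pos : (0:ℝ) < a₁₂ * a₂ * a₃ := mul_pos (mul_pos pa₁₂ pa₂) pa₃
  have m4pos : (0:ℝ) < a₁₂ * a₁₂₃ * a₂ := mul_pos (mul_pos pa₁₂ pa₁₂₃) pa₂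
  have m5pos : (0:ℝ) < a₁ * a₁₂ * a₃ := mul_pos (mul_pos pa₁ pa₁₂) pa₃
  have m7pos : (0:ℝ) < a₁ * a₁₂₃ * a₂ * a₃ :=
    mul_pos (mul_pos (mul_pos pa₁ pa₁₂₃) pa₂) pa₃
  have f12 : a₁₂ = b₁₂ := by
    apply sq_eq _ _ pa₁₂ pb₁₂
    have : a₁₂^2 * (a₁ * a₁₂₃ * a₂ * a₃) = b₁₂^2 * (a₁ * a₁₂₃ * a₂ * a₃) := by
      linear_combination (a₁ * a₁₂ * a₁₂₃) * e3 + (b₁₂ * b₂ * b₃) * e6 - b₁₂^2 * e7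
    exact mul_right_cancel₀ (ne_of_gt m7pos) this
  have f1 : a₁ = b₁ := by
    apply sq_eq _ _ pa₁ pb₁
    have : a₁^2 * (a₁₂ * a₂ * a₃) = b₁^2 * (a₁₂ * a₂ * a₃) := by
      linear_combination (a₁ * a₁₂ * a₃) * e1 + (b₁ * b₂) * e5 - b₁^2 * e3
    exact mul_right_cancel₀ (ne_of_gt m3pos) this
  have f2 : a₂ = b₂ := by
    apply sq_eq _ _ pa₂ pb₂
    have : a₂^2 * (a₁ * a₁₂ * a₃) = b₂^2 * (a₁ * a₁₂ * a₃) := by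
      linear_combination (a₁₂ * a₂ * a₃) * e1 + (b₁ * b₂) * e3 - b₂^2 * e5
    exact mul_right_cancel₀ (ne_of_gt m5pos) this
  have f3 : a₃ = b₃ := by
    apply sq_eq _ _ pa₃ pb₃
    have : a₃^2 * (a₁₂ * a₁₂₃ * a₂) = b₃^2 * (a₁₂ * a₁₂₃ * a₂) := by
      linear_combination (a₁₂ * a₂ * a₃) * e2 + (b₁₂₃ * b₃) * e3 - b₃^2 * e4
    exact mul_right_cancel₀ (ne_of_gt m4pos) this
  have f123 : a₁₂₃ = b₁₂₃ := by
    apply sq_eq _ _ pa₁₂₃ pb₁₂₃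
    have : a₁₂₃^2 * (a₁₂ * a₂ * a₃) = b₁₂₃^2 * (a₁₂ * a₂ * a₃) := by
      linear_combination (a₁₂ * a₁₂₃ * a₂) * e2 + (b₁₂₃ * b₃) * e4 - b₁₂₃^2 * e3
    exact mul_right_cancel₀ (ne_of_gt m3pos) this
  exact ⟨f1, f2, f12, f3, f123⟩
end
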